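/- Every graded weakly prime ideal of a G-graded ring R is a graded weakly 2-absorbing ideal of R. -/

import Mathlib

variable {G R : Type*} [AddGroup G] [DecidableEq G] [Ring R]

/-- `x` is a homogeneous element of the `G`-graded ring `R`. -/
def IsHomog (𝒜 : G → AddSubgroup R) (x : R) : Prop := ∃ g, x ∈ 𝒜 g

/-- A two-sided ideal is graded if it contains all homogeneous components of its elements. -/
def IsGradedIdeal (𝒜 : G → AddSubgroup R) [GradedRing 𝒜] (P : TwoSidedIdeal R) : Prop :=
  ∀ a ∈ P, ∀ g : G, (DirectSum.decompose 𝒜 a g : R) ∈ P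

/-- Graded weakly prime: a proper graded ideal `P` such that `0 ≠ IJ ⊆ P` for graded
ideals `I, J` implies `I ⊆ P` or `J ⊆ P`. -/
def IsGradedWeaklyPrime (𝒜 : G → AddSubgroup R) [GradedRing 𝒜] (P : TwoSidedIdeal R) : Prop :=
  P ≠ ⊤ ∧ IsGradedIdeal 𝒜 P ∧
    ∀ I J : TwoSidedIdeal R, IsGradedIdeal 𝒜 I → IsGradedIdeal 𝒜 J →
      (∃ a ∈ I, ∃ b ∈ J, a * b ≠ 0) → (∀ a ∈ I, ∀ b ∈ J, a * b ∈ P) →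
      I ≤ P ∨ J ≤ P

/-- Graded weakly 2-absorbing: a proper graded ideal `P` such that for homogeneous `x, y, z`,
`0 ≠ xRyRz ⊆ P` implies `xy ∈ P` or `yz ∈ P` or `xz ∈ P`. -/
def IsGradedWeakly2Absorbing (𝒜 : G → AddSubgroup R) [GradedRing 𝒜] (P : TwoSidedIdeal R) : Prop :=
  P ≠ ⊤ ∧ IsGradedIdeal 𝒜 P ∧
    ∀ x y z : R, IsHomog 𝒜 x → IsHomog 𝒜 y → IsHomog 𝒜 z →
      (∃ r s : R, x * r * y * s * z ≠ 0) → (∀ r s : R, x * r * y * s * z ∈ P) →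
      x * y ∈ P ∨ y * z ∈ P ∨ x * z ∈ P

/-!
Let `x, y, z` be homogeneous with `0 ≠ xRyRz ⊆ P`. The two-sided ideals `I = RxR` and `J`
generated by `yRz` are spanned by homogeneous elements (`y h z` with `h` homogeneous suffice for
`J`), hence graded; `IJ ⊆ P` and `x r₀ · y s₀ z ≠ 0`. Weak primeness gives `I ⊆ P`, whence
`xy ∈ P`, or `J ⊆ P`, whence `yz ∈ P`.
-/

open DirectSum TwoSidedIdeal

namespace TwoSidedIdeal

variable {P : TwoSidedIdeal R} {S : Set R}

lemma mul_mul_mem_of_mem_span_left {b : R} (h : ∀ s ∈ S, ∀ r, s * r * b ∈ P) {a : R}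
    (ha : a ∈ span S) (r : R) : a * r * b ∈ P := by
  induction ha using span_induction generalizing r with
  | mem s hs => exact h s hs r
  | zero => simp
  | add x y _ _ hx hy => simpa only [add_mul] using P.add_mem (hx r) (hy r)
  | neg x _ hx => simpa only [neg_mul] using P.neg_mem (hx r)
  | left_absorb c x _ hx => simpa only [mul_assoc] using P.mul_mem_left c _ (hx r)
  | right_absorb c x _ hx => simpa only [mul_assoc] using hx (c * r)

lemma mul_mul_mem_of_mem_span_right {a : R} (h : ∀ t ∈ S, ∀ r, a * r * t ∈ P) {b : R}
    (hb : b ∈ span S) (r : R) : a * r * b ∈ P := by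
  induction hb using span_induction generalizing r with
  | mem t ht => exact h t ht r
  | zero => simp
  | add x y _ _ hx hy => simpa only [mul_add] using P.add_mem (hx r) (hy r)
  | neg x _ hx => simpa only [mul_neg] using P.neg_mem (hx r)
  | left_absorb c x _ hx => simpa only [mul_assoc] using hx (r * c)
  | right_absorb c x _ hx => simpa only [mul_assoc] using P.mul_mem_right _ c (hx r)

end TwoSidedIdeal

section Graded

variable (𝒜 : G → AddSubgroup R) [GradedRing 𝒜] {I : TwoSidedIdeal R}

lemma coe_decompose_mul_left_mem {x : R} (hx : ∀ g, (decompose 𝒜 x g : R) ∈ I) (c : R)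
    (g : G) : (decompose 𝒜 (c * x) g : R) ∈ I := by
  induction c using DirectSum.Decomposition.inductionOn 𝒜 with
  | zero => simp
  | @homogeneous i c =>
    rw [← add_neg_cancel_left i g, coe_decompose_mul_add_of_left_mem 𝒜 c.2]
    exact I.mul_mem_left _ _ (hx _)
  | add c c' hc hc' =>
    rw [add_mul, decompose_add, DirectSum.add_apply, AddMemClass.coe_add]
    exact I.add_mem hc hc'

lemma coe_decompose_mul_right_mem {x : R} (hx : ∀ g, (decompose 𝒜 x g : R) ∈ I) (c : R)
    (g : G) : (decompose 𝒜 (x * c) g : R) ∈ I := by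
  induction c using DirectSum.Decomposition.inductionOn 𝒜 with
  | zero => simp
  | @homogeneous i c =>
    rw [← neg_add_cancel_right g i, coe_decompose_mul_add_of_right_mem 𝒜 c.2]
    exact I.mul_mem_right _ _ (hx _)
  | add c c' hc hc' =>
    rw [mul_add, decompose_add, DirectSum.add_apply, AddMemClass.coe_add]
    exact I.add_mem hc hc'

lemma isGradedIdeal_span {S : Set R} (hS : ∀ s ∈ S, IsHomog 𝒜 s) :
    IsGradedIdeal 𝒜 (span S) := by
  intro a ha
  induction ha using span_induction with
  | mem s hs =>
    obtain ⟨i, hi⟩ := hS s hs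
    intro g
    by_cases hig : i = g
    · rw [← hig, decompose_of_mem_same 𝒜 hi]
      exact subset_span hs
    · rw [decompose_of_mem_ne 𝒜 hi hig]
      exact (span S).zero_mem
  | zero => simp
  | add x y _ _ hx hy =>
    intro g
    rw [decompose_add, DirectSum.add_apply, AddMemClass.coe_add]
    exact add_mem _ (hx g) (hy g)
  | neg x _ hx =>
    intro g
    rw [decompose_neg, DFinsupp.neg_apply, NegMemClass.coe_neg]
    exact neg_mem _ (hx g)
  | left_absorb c x _ hx => exact coe_decompose_mul_left_mem 𝒜 hx c
  | right_absorb c x _ hx => exact coe_decompose_mul_right_mem 𝒜 hx c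

lemma mul_mul_mem_span_homog (y z s : R) :
    y * s * z ∈ span ((fun h ↦ y * h * z) '' {h | IsHomog 𝒜 h}) := by
  induction s using DirectSum.Decomposition.inductionOn 𝒜 with
  | zero => simp
  | @homogeneous i h => exact subset_span ⟨h, ⟨i, h.2⟩, rfl⟩
  | add s s' hs hs' => simpa only [mul_add, add_mul] using add_mem _ hs hs'

end Graded

/-- Every graded weakly prime ideal is graded weakly 2-absorbing. -/
theorem stmt2 (𝒜 : G → AddSubgroup R) [GradedRing 𝒜] (P : TwoSidedIdeal R)
    (hP : IsGradedWeaklyPrime 𝒜 P) : IsGradedWeakly2Absorbing 𝒜 P := by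
  obtain ⟨hPtop, hPgr, hPprime⟩ := hP
  refine ⟨hPtop, hPgr, ?_⟩
  rintro x y z ⟨dx, hx⟩ ⟨dy, hy⟩ ⟨dz, hz⟩ ⟨r₀, s₀, hne⟩ hxyz
  set I := span {x}
  set J := span ((fun h ↦ y * h * z) '' {h | IsHomog 𝒜 h})
  have hIgr : IsGradedIdeal 𝒜 I := isGradedIdeal_span 𝒜 (by simpa using ⟨dx, hx⟩)
  have hJgr : IsGradedIdeal 𝒜 J := isGradedIdeal_span 𝒜 <| Set.forall_mem_image.2
    fun _ ⟨_, hh⟩ ↦ ⟨_, SetLike.mul_mem_graded (SetLike.mul_mem_graded hy hh) hz⟩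
  have hIJ : ∀ a ∈ I, ∀ b ∈ J, a * b ∈ P := by
    intro a ha b hb
    refine mul_one a ▸ mul_mul_mem_of_mem_span_left (fun s hs r ↦ ?_) ha 1
    rw [Set.mem_singleton_iff.1 hs]
    refine mul_mul_mem_of_mem_span_right ?_ hb r
    rintro _ ⟨h, -, rfl⟩ r'
    simpa only [mul_assoc] using hxyz r' h
  have hIJne : ∃ a ∈ I, ∃ b ∈ J, a * b ≠ 0 :=
    ⟨x * r₀, I.mul_mem_right _ _ (subset_span rfl), y * s₀ * z, mul_mul_mem_span_homog 𝒜 y z s₀,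
      by simpa only [mul_assoc] using hne⟩
  rcases hPprime I J hIgr hJgr hIJne hIJ with hIP | hJP
  · exact Or.inl (P.mul_mem_right _ _ (hIP (subset_span rfl)))
  · exact Or.inr (Or.inl (by simpa using hJP (mul_mul_mem_span_homog 𝒜 y z 1)))
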